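/- Stone's monotonicity of sphere entropies: define for n ≥ 1 the real number a(n) = (n/(2πe))^{n/2} · 2 π^{(n+1)/2} / Γ((n+1)/2), which is the entropy λ(Sⁿ) of the round shrinking n-sphere. Then the sequence a is strictly decreasing, i.e. a(n+1) < a(n) for all n ≥ 1, and a(n) > 1 for all n ≥ 1; in particular √(2π/e) = a(1) > a(2) = 4/e > a(3) > ⋯ > 1. -/

import Mathlib

/-!
With `x = n / 2` one has `log a(n) = log (2√π) + x (log x - 1) - log Γ(x + 1/2)`.

Monotonicity then reduces to Kershaw's inequality `(x + 1/4) Γ(x + 1/2)² < Γ(x + 1)²` plus an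
elementary bound on `(x + 1/2) log (x + 1/2) - x log x`. Kershaw's inequality holds because the
ratio `Γ(x + 1)² / ((x + 1/4) Γ(x + 1/2)²)` strictly decreases under `x ↦ x + 1` while, by
log-convexity of `Γ`, it tends to `1` at infinity.

For the lower bound, Legendre's duplication formula expresses `a(n) a(n + 1)` through `n!`, and the
Stirling bound `n! ≤ e √n (n/e)ⁿ` gives `a(n) a(n + 1) > 2 √(2π) / e^{3/2} > 1`; since
`a(n + 1) < a(n)`, also `a(n)² > 1`.
-/

open Real

/-- The entropy `λ(Sⁿ)` of the round shrinking `n`-sphere, in closed form: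
`a n = (n/(2πe))^{n/2} · 2 π^{(n+1)/2} / Γ((n+1)/2)`. -/
noncomputable def sphereEntropy (n : ℕ) : ℝ :=
  ((n : ℝ) / (2 * π * Real.exp 1)) ^ ((n : ℝ) / 2) *
    (2 * π ^ (((n : ℝ) + 1) / 2)) / Real.Gamma (((n : ℝ) + 1) / 2)

open Filter Topology Set
open scoped Nat

namespace Real

theorem one_add_mul_log_one_add_lt {t : ℝ} (ht : 0 < t) :
    (1 + t) * log (1 + t) < t + t * log (1 + t / 2) := by
  let g : ℝ → ℝ := fun s => s + s * log (1 + s / 2) - (1 + s) * log (1 + s)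
  have hg' : ∀ s, 0 ≤ s → HasDerivAt g (s / (2 + s) - log ((1 + s) / (1 + s / 2))) s := by
    intro s hs
    have h₁ : 1 + s / 2 ≠ 0 := by positivity
    have h₂ : 1 + s ≠ 0 := by positivity
    refine (((hasDerivAt_id s).add ((hasDerivAt_id s).mul
      ((((hasDerivAt_id s).div_const 2).const_add 1).log h₁))).sub
      (((hasDerivAt_id s).const_add 1).mul
        (((hasDerivAt_id s).const_add 1).log h₂))).congr_deriv ?_
    rw [log_div h₂ h₁]
    simp only [id]
    field_simp
    ring
  have hmono : StrictMonoOn g (Ici 0) := by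
    refine strictMonoOn_of_deriv_pos (convex_Ici 0)
      (fun s hs => (hg' s hs).continuousAt.continuousWithinAt) fun s hs => ?_
    rw [interior_Ici] at hs
    have hs : 0 < s := hs
    rw [(hg' s hs.le).deriv, sub_pos]
    have h₁ : (1 + s) / (1 + s / 2) ≠ 1 := by
      rw [Ne, div_eq_one_iff_eq (by positivity)]; linarith
    calc log ((1 + s) / (1 + s / 2)) < (1 + s) / (1 + s / 2) - 1 :=
          log_lt_sub_one_of_pos (by positivity) h₁
      _ = s / (2 + s) := by field_simp; ring
  simpa [g] using hmono self_mem_Ici ht.le ht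

theorem add_half_mul_log_add_half_lt {x : ℝ} (hx : 0 < x) :
    (x + 1 / 2) * log (x + 1 / 2) < x * log x + (1 + log (x + 1 / 4)) / 2 := by
  have h := one_add_mul_log_one_add_lt (inv_pos.2 (mul_pos two_pos hx))
  have e₁ : 1 + (2 * x)⁻¹ = (x + 1 / 2) / x := by field_simp
  have e₂ : 1 + (2 * x)⁻¹ / 2 = (x + 1 / 4) / x := by field_simp; ring
  rw [e₁, e₂, log_div (by positivity) hx.ne', log_div (by positivity) hx.ne'] at h
  have key : (2 * x + 1) * (log (x + 1 / 2) - log x) < 1 + (log (x + 1 / 4) - log x) :=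
    calc (2 * x + 1) * (log (x + 1 / 2) - log x)
        = 2 * x * ((x + 1 / 2) / x * (log (x + 1 / 2) - log x)) := by field_simp
      _ < 2 * x * ((2 * x)⁻¹ + (2 * x)⁻¹ * (log (x + 1 / 4) - log x)) := by gcongr
      _ = 1 + (log (x + 1 / 4) - log x) := by field_simp
  linarith

theorem Gamma_add_half_sq_le {y : ℝ} (hy : 0 < y) :
    Gamma (y + 1 / 2) ^ 2 ≤ Gamma y * Gamma (y + 1) := by
  have h := Gamma_mul_add_mul_le_rpow_Gamma_mul_rpow_Gamma hy (by linarith : 0 < y + 1)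
    one_half_pos one_half_pos (add_halves 1)
  rw [← sqrt_eq_rpow, ← sqrt_eq_rpow, show 1 / 2 * y + 1 / 2 * (y + 1) = y + 1 / 2 by ring] at h
  calc Gamma (y + 1 / 2) ^ 2 ≤ (√(Gamma y) * √(Gamma (y + 1))) ^ 2 :=
        pow_le_pow_left₀ (Gamma_pos_of_pos (by linarith)).le h 2
    _ = Gamma y * Gamma (y + 1) := by
        rw [mul_pow, sq_sqrt (Gamma_pos_of_pos hy).le, sq_sqrt (Gamma_pos_of_pos (by linarith)).le]

theorem mul_Gamma_add_half_sq_le {x : ℝ} (hx : 0 < x) :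
    x * Gamma (x + 1 / 2) ^ 2 ≤ Gamma (x + 1) ^ 2 := by
  calc x * Gamma (x + 1 / 2) ^ 2 ≤ x * (Gamma x * Gamma (x + 1)) :=
        mul_le_mul_of_nonneg_left (Gamma_add_half_sq_le hx) hx.le
    _ = Gamma (x + 1) ^ 2 := by rw [Gamma_add_one hx.ne']; ring

theorem Gamma_add_one_sq_le {x : ℝ} (hx : 0 < x) :
    Gamma (x + 1) ^ 2 ≤ (x + 1 / 2) * Gamma (x + 1 / 2) ^ 2 := by
  have h := Gamma_add_half_sq_le (by positivity : 0 < x + 1 / 2)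
  rw [add_assoc, add_halves, Gamma_add_one (s := x + 1 / 2) (by positivity)] at h
  linarith

noncomputable def kershawRatio (x : ℝ) : ℝ :=
  Gamma (x + 1) ^ 2 / ((x + 1 / 4) * Gamma (x + 1 / 2) ^ 2)

theorem kershawRatio_add_one_lt {x : ℝ} (hx : 0 < x) : kershawRatio (x + 1) < kershawRatio x := by
  have hΓ₁ := Gamma_pos_of_pos (by linarith : 0 < x + 1)
  have hΓ₂ := Gamma_pos_of_pos (by linarith : 0 < x + 1 / 2)
  rw [kershawRatio, kershawRatio, Gamma_add_one (s := x + 1) (by positivity),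
    show x + 1 + 1 / 2 = x + 1 / 2 + 1 by ring, Gamma_add_one (s := x + 1 / 2) (by positivity),
    div_lt_div_iff₀ (by positivity) (by positivity)]
  have hpoly : (x + 1) ^ 2 * (x + 1 / 4) < (x + 1 / 2) ^ 2 * (x + 1 + 1 / 4) := by nlinarith
  calc ((x + 1) * Gamma (x + 1)) ^ 2 * ((x + 1 / 4) * Gamma (x + 1 / 2) ^ 2)
      = (x + 1) ^ 2 * (x + 1 / 4) * (Gamma (x + 1) ^ 2 * Gamma (x + 1 / 2) ^ 2) := by ring
    _ < (x + 1 / 2) ^ 2 * (x + 1 + 1 / 4) * (Gamma (x + 1) ^ 2 * Gamma (x + 1 / 2) ^ 2) := by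
        gcongr
    _ = Gamma (x + 1) ^ 2 * ((x + 1 + 1 / 4) * ((x + 1 / 2) * Gamma (x + 1 / 2)) ^ 2) := by ring

theorem abs_kershawRatio_sub_one_le {x : ℝ} (hx : 0 < x) :
    |kershawRatio x - 1| ≤ 1 / (4 * x + 1) := by
  have hΓ := Gamma_pos_of_pos (by linarith : 0 < x + 1 / 2)
  have hd : 0 < (x + 1 / 4) * Gamma (x + 1 / 2) ^ 2 := by positivity
  have hnum : |Gamma (x + 1) ^ 2 - (x + 1 / 4) * Gamma (x + 1 / 2) ^ 2| ≤
      Gamma (x + 1 / 2) ^ 2 / 4 :=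
    abs_le.2 ⟨by linarith [mul_Gamma_add_half_sq_le hx], by linarith [Gamma_add_one_sq_le hx]⟩
  calc |kershawRatio x - 1|
      = |Gamma (x + 1) ^ 2 - (x + 1 / 4) * Gamma (x + 1 / 2) ^ 2| /
          ((x + 1 / 4) * Gamma (x + 1 / 2) ^ 2) := by
        rw [kershawRatio, div_sub_one hd.ne', abs_div, abs_of_pos hd]
    _ ≤ Gamma (x + 1 / 2) ^ 2 / 4 / ((x + 1 / 4) * Gamma (x + 1 / 2) ^ 2) := by gcongr
    _ = 1 / (4 * x + 1) := by field_simp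

theorem tendsto_kershawRatio_atTop : Tendsto kershawRatio atTop (𝓝 1) := by
  have h : Tendsto (fun x : ℝ => 1 / (4 * x + 1)) atTop (𝓝 0) :=
    tendsto_const_nhds.div_atTop
      (tendsto_atTop_add_const_right _ _ (tendsto_id.const_mul_atTop four_pos))
  refine tendsto_iff_norm_sub_tendsto_zero.2
    (squeeze_zero' (Eventually.of_forall fun _ => norm_nonneg _) ?_ h)
  filter_upwards [eventually_gt_atTop 0] with x hx
  exact abs_kershawRatio_sub_one_le hx

theorem one_lt_kershawRatio {x : ℝ} (hx : 0 < x) : 1 < kershawRatio x := by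
  have hanti : Antitone fun k : ℕ => kershawRatio (x + 1 + k) := by
    refine antitone_nat_of_succ_le fun k => ?_
    rw [Nat.cast_succ, ← add_assoc]
    exact (kershawRatio_add_one_lt (by positivity)).le
  have hlim : Tendsto (fun k : ℕ => kershawRatio (x + 1 + k)) atTop (𝓝 1) :=
    tendsto_kershawRatio_atTop.comp (tendsto_atTop_add_const_left _ _ tendsto_natCast_atTop_atTop)
  calc 1 ≤ kershawRatio (x + 1) := by simpa using hanti.le_of_tendsto hlim 0
    _ < kershawRatio x := kershawRatio_add_one_lt hx

theorem add_quarter_mul_Gamma_add_half_sq_lt {x : ℝ} (hx : 0 < x) :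
    (x + 1 / 4) * Gamma (x + 1 / 2) ^ 2 < Gamma (x + 1) ^ 2 := by
  have hΓ := Gamma_pos_of_pos (by linarith : 0 < x + 1 / 2)
  have h := one_lt_kershawRatio hx
  rwa [kershawRatio, one_lt_div (by positivity)] at h

theorem log_factorial_le {n : ℕ} (hn : n ≠ 0) :
    log (n ! : ℝ) ≤ 1 + log n / 2 + n * (log n - 1) := by
  obtain ⟨m, rfl⟩ := Nat.exists_eq_succ_of_ne_zero hn
  have h := Stirling.log_stirlingSeq'_antitone (Nat.zero_le m)
  simp only [Function.comp_apply, Nat.succ_eq_add_one, zero_add, Stirling.stirlingSeq_one,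
    Stirling.log_stirlingSeq_formula] at h
  rw [log_div (exp_pos 1).ne' (by positivity), log_exp, log_sqrt zero_le_two,
    log_mul two_ne_zero (by positivity), log_div (by positivity) (exp_pos 1).ne', log_exp] at h
  linarith

theorem three_le_three_mul_log_two_add_log_pi : 3 ≤ 3 * log 2 + log π := by
  have h : exp 3 ≤ 2 ^ 3 * π := by
    calc exp 3 = exp 1 ^ 3 := by rw [← exp_nat_mul]; norm_num
      _ ≤ 2.7182818286 ^ 3 := by gcongr; exact exp_one_lt_d9.le
      _ ≤ 2 ^ 3 * 3 := by norm_num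
      _ ≤ 2 ^ 3 * π := by gcongr; exact pi_gt_three.le
  rw [← le_log_iff_exp_le (by positivity), log_mul (by positivity) pi_ne_zero, log_pow] at h
  exact_mod_cast h

end Real

theorem sphereEntropy_eq (n : ℕ) :
    sphereEntropy n = 2 * √π * (n / (2 * exp 1)) ^ ((n : ℝ) / 2) / Gamma (n / 2 + 1 / 2) := by
  rw [sphereEntropy, add_div, show (n : ℝ) / (2 * π * exp 1) = n / (2 * exp 1) / π by ring,
    div_rpow (by positivity) pi_pos.le, rpow_add pi_pos, sqrt_eq_rpow]
  field_simp

theorem sphereEntropy_pos {n : ℕ} (hn : n ≠ 0) : 0 < sphereEntropy n := by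
  rw [sphereEntropy_eq]
  have := Gamma_pos_of_pos (by positivity : (0 : ℝ) < n / 2 + 1 / 2)
  positivity

theorem log_sphereEntropy {n : ℕ} (hn : n ≠ 0) :
    log (sphereEntropy n) =
      log (2 * √π) + n / 2 * (log (n / 2) - 1) - log (Gamma (n / 2 + 1 / 2)) := by
  have hΓ := Gamma_pos_of_pos (by positivity : (0 : ℝ) < n / 2 + 1 / 2)
  rw [sphereEntropy_eq, log_div (by positivity) hΓ.ne', log_mul (by positivity) (by positivity),
    log_rpow (by positivity), div_mul_eq_div_div, log_div (by positivity) (exp_pos 1).ne',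
    log_exp]

theorem sphereEntropy_succ_lt {n : ℕ} (hn : n ≠ 0) :
    sphereEntropy (n + 1) < sphereEntropy n := by
  rw [← log_lt_log_iff (sphereEntropy_pos n.add_one_ne_zero) (sphereEntropy_pos hn),
    log_sphereEntropy hn, log_sphereEntropy n.add_one_ne_zero, Nat.cast_succ, add_div,
    add_assoc, add_halves]
  set x : ℝ := n / 2
  have hx : 0 < x := by positivity
  have hKershaw : log (x + 1 / 4) + 2 * log (Gamma (x + 1 / 2)) < 2 * log (Gamma (x + 1)) := by
    have hΓ := Gamma_pos_of_pos (by positivity : 0 < x + 1 / 2)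
    have h := log_lt_log (by positivity) (add_quarter_mul_Gamma_add_half_sq_lt hx)
    rwa [log_mul (by positivity) (by positivity), log_pow, log_pow, Nat.cast_ofNat] at h
  linarith [add_half_mul_log_add_half_lt hx]

theorem one_lt_sphereEntropy_mul_succ {n : ℕ} (hn : n ≠ 0) :
    1 < sphereEntropy n * sphereEntropy (n + 1) := by
  rw [← log_pos_iff (mul_pos (sphereEntropy_pos hn) (sphereEntropy_pos n.add_one_ne_zero)).le,
    log_mul (sphereEntropy_pos hn).ne' (sphereEntropy_pos n.add_one_ne_zero).ne',
    log_sphereEntropy hn, log_sphereEntropy n.add_one_ne_zero, Nat.cast_succ, add_div,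
    add_assoc, add_halves, log_mul two_ne_zero (by positivity), log_sqrt pi_pos.le]
  have hStirling := log_factorial_le hn
  set x : ℝ := n / 2
  have hx : 0 < x := by positivity
  have hnx : (n : ℝ) = 2 * x := by ring
  have hDuplication : log (Gamma (x + 1 / 2)) + log (Gamma (x + 1)) =
      log (n ! : ℝ) - 2 * x * log 2 + log π / 2 := by
    have h := Gamma_mul_Gamma_add_half (x + 1 / 2)
    rw [add_assoc, add_halves, show 2 * (x + 1 / 2) = n + 1 by ring, Gamma_nat_eq_factorial,
      show 1 - ((n : ℝ) + 1) = -(2 * x) by ring] at h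
    have hΓ₁ := Gamma_pos_of_pos (by positivity : 0 < x + 1 / 2)
    have hΓ₂ := Gamma_pos_of_pos (by positivity : 0 < x + 1)
    rw [← log_mul hΓ₁.ne' hΓ₂.ne', h, log_mul (by positivity) (by positivity),
      log_mul (by positivity) (by positivity), log_rpow two_pos, log_sqrt pi_pos.le]
    ring
  have hlog : (x + 1 / 2) * log x < (x + 1 / 2) * log (x + 1 / 2) := by
    gcongr
    linarith
  rw [hnx, log_mul two_ne_zero hx.ne'] at hStirling
  linarith [three_le_three_mul_log_two_add_log_pi]

theorem sphereEntropy_one : sphereEntropy 1 = √(2 * π / exp 1) := by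
  rw [sphereEntropy_eq]
  norm_num
  rw [← sqrt_eq_rpow, show (2 : ℝ) * √π = √(2 ^ 2 * π) by
    rw [sqrt_mul (by positivity), sqrt_sq two_pos.le], ← sqrt_mul (by positivity)]
  congr 1
  field_simp

theorem sphereEntropy_two : sphereEntropy 2 = 4 / exp 1 := by
  rw [sphereEntropy_eq]
  norm_num
  rw [show (3 : ℝ) / 2 = 1 / 2 + 1 by norm_num, Gamma_add_one one_half_pos.ne', Gamma_one_half_eq]
  have := sqrt_pos.2 pi_pos
  field_simp
  norm_num

/-- Stone's monotonicity: the sphere entropies are strictly decreasing in the dimension and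
bounded below by `1`; in particular `√(2π/e) = λ(S¹) > λ(S²) = 4/e > λ(S³) > ⋯ > 1`. -/
theorem sphereEntropy_strictAnti_and_gt_one :
    (∀ n : ℕ, 1 ≤ n → sphereEntropy (n + 1) < sphereEntropy n) ∧
    (∀ n : ℕ, 1 ≤ n → 1 < sphereEntropy n) ∧
    sphereEntropy 1 = Real.sqrt (2 * π / Real.exp 1) ∧
    sphereEntropy 2 = 4 / Real.exp 1 := by
  refine ⟨fun n hn => sphereEntropy_succ_lt (by omega), fun n hn => ?_, sphereEntropy_one,
    sphereEntropy_two⟩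
  have hn : n ≠ 0 := by omega
  have hpos := sphereEntropy_pos hn
  refine (one_lt_sq_iff₀ hpos.le).1 ?_
  calc 1 < sphereEntropy n * sphereEntropy (n + 1) := one_lt_sphereEntropy_mul_succ hn
    _ < sphereEntropy n ^ 2 := by
        rw [sq]
        exact mul_lt_mul_of_pos_left (sphereEntropy_succ_lt hn) hpos
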